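/- arXiv:2209.13044 — 7 statements merged into one kernel-verified Lean document; each statement's English description precedes it below -/
import Mathlib

section
/- For every m ∈ ℕ and all indices j,k,l ∈ Fin n, the following identity of multivariate polynomials holds: i·Σ_i Â^j_i · ∂^i_A([Â^m]^k_l) = Σ_i [Â^m]^k_i · f^{ij}_l + Σ_i [Â^m]^i_l · f^{jk}_i, where Â^m denotes the m-th matrix power of Â. -/
open MvPolynomial
open MvPolynomial Finset

lemma scalar_jac (n : ℕ) (f : Fin n → Fin n → Fin n → ℂ)
    (hanti : ∀ a b c, f a b c = - f b a c)
    (hjac : ∀ i j k a, ∑ l, (f k l i * f j a l + f j l i * f a k l + f a l i * f k j l) = 0)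
    (a j p l : Fin n) :
    ∑ s, f a j s * f s p l = ∑ s, (f a p s * f s j l + f a s l * f j p s) := by
  have h := hjac l a p j
  have h2 : ∀ s : Fin n, f a j s * f s p l - (f a p s * f s j l + f a s l * f j p s)
      = -(f p s l * f a j s + f a s l * f j p s + f j s l * f p a s) := by
    intro s
    rw [hanti s p l, hanti a p s, hanti s j l]
    ring
  have h3 : ∑ s, (f a j s * f s p l - (f a p s * f s j l + f a s l * f j p s)) = 0 := by
    rw [Finset.sum_congr rfl (fun s _ => h2 s), Finset.sum_neg_distrib, h, neg_zero]
  rw [Finset.sum_sub_distrib] at h3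
  exact sub_eq_zero.mp h3

lemma pderiv_Ahat (n : ℕ) (f : Fin n → Fin n → Fin n → ℂ)
    (Ahat : Matrix (Fin n) (Fin n) (MvPolynomial (Fin n) ℂ))
    (hA : ∀ b c, Ahat b c = ∑ a, MvPolynomial.C (-Complex.I * f a b c) * MvPolynomial.X a)
    (i p l : Fin n) : pderiv i (Ahat p l) = C (-Complex.I * f i p l) := by
  rw [hA]
  simp [pderiv_X, Pi.single_apply]

lemma key (n : ℕ) (f : Fin n → Fin n → Fin n → ℂ)
    (hanti : ∀ a b c, f a b c = - f b a c)
    (hjac : ∀ i j k a, ∑ l, (f k l i * f j a l + f j l i * f a k l + f a l i * f k j l) = 0)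
    (Ahat : Matrix (Fin n) (Fin n) (MvPolynomial (Fin n) ℂ))
    (hA : ∀ b c, Ahat b c = ∑ a, MvPolynomial.C (-Complex.I * f a b c) * MvPolynomial.X a)
    (j p l : Fin n) :
    C Complex.I * ∑ i, Ahat j i * pderiv i (Ahat p l) =
      ∑ i, Ahat p i * C (f i j l) + ∑ i, Ahat i l * C (f j p i) := by
  have hL : C Complex.I * ∑ i, Ahat j i * pderiv i (Ahat p l)
      = ∑ a, C (-Complex.I * ∑ s, f a j s * f s p l) * X a := by
    rw [Finset.mul_sum]
    have hterm : ∀ i : Fin n, C Complex.I * (Ahat j i * pderiv i (Ahat p l))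
        = ∑ a, C (-Complex.I * (f a j i * f i p l)) * X a := by
      intro i
      rw [pderiv_Ahat n f Ahat hA, hA, Finset.sum_mul, Finset.mul_sum]
      refine Finset.sum_congr rfl fun a _ => ?_
      have hs : Complex.I * (-Complex.I * f a j i) * (-Complex.I * f i p l)
          = -Complex.I * (f a j i * f i p l) := by
        linear_combination (Complex.I * f a j i * f i p l) * Complex.I_mul_I
      rw [show C Complex.I * (C (-Complex.I * f a j i) * X a * C (-Complex.I * f i p l))
          = (C Complex.I * C (-Complex.I * f a j i) * C (-Complex.I * f i p l)) * X a from by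
        ring, ← C_mul, ← C_mul, hs]
    rw [Finset.sum_congr rfl fun i _ => hterm i, Finset.sum_comm]
    refine Finset.sum_congr rfl fun a _ => ?_
    rw [← Finset.sum_mul, ← map_sum, ← Finset.mul_sum, Finset.mul_sum]
  have h1 : ∀ i : Fin n, Ahat p i * C (f i j l)
      = ∑ a, C (-Complex.I * (f a p i * f i j l)) * X a := by
    intro i; rw [hA, Finset.sum_mul]
    refine Finset.sum_congr rfl fun a _ => ?_
    rw [show C (-Complex.I * f a p i) * X a * C (f i j l)
        = (C (-Complex.I * f a p i) * C (f i j l)) * X a from by ring, ← C_mul, mul_assoc]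
  have h2 : ∀ i : Fin n, Ahat i l * C (f j p i)
      = ∑ a, C (-Complex.I * (f a i l * f j p i)) * X a := by
    intro i; rw [hA, Finset.sum_mul]
    refine Finset.sum_congr rfl fun a _ => ?_
    rw [show C (-Complex.I * f a i l) * X a * C (f j p i)
        = (C (-Complex.I * f a i l) * C (f j p i)) * X a from by ring, ← C_mul, mul_assoc]
  have hR1 : ∑ i, Ahat p i * C (f i j l)
      = ∑ a, C (-Complex.I * ∑ s, f a p s * f s j l) * X a := by
    rw [Finset.sum_congr rfl fun i _ => h1 i, Finset.sum_comm]
    refine Finset.sum_congr rfl fun a _ => ?_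
    rw [← Finset.sum_mul, ← map_sum, ← Finset.mul_sum, Finset.mul_sum]
  have hR2 : ∑ i, Ahat i l * C (f j p i)
      = ∑ a, C (-Complex.I * ∑ s, f a s l * f j p s) * X a := by
    rw [Finset.sum_congr rfl fun i _ => h2 i, Finset.sum_comm]
    refine Finset.sum_congr rfl fun a _ => ?_
    rw [← Finset.sum_mul, ← map_sum, ← Finset.mul_sum, Finset.mul_sum]
  rw [hL, hR1, hR2, ← Finset.sum_add_distrib]
  refine Finset.sum_congr rfl fun a _ => ?_
  rw [← add_mul, ← C_add]
  congr 1
  rw [scalar_jac n f hanti hjac a j p l, Finset.mul_sum, Finset.mul_sum, Finset.mul_sum,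
    ← Finset.sum_add_distrib]
  exact congrArg C (Finset.sum_congr rfl fun s _ => by ring)


/-- For every `m ∈ ℕ` and indices `j,k,l`, the polynomial identity
`i Σ_i Â^j_i ∂^i_A([Â^m]^k_l) = Σ_i [Â^m]^k_i f^{ij}_l + Σ_i [Â^m]^i_l f^{jk}_i` holds,
where `Â` is the matrix with entries `Â^b_c = -i Σ_a f^{ab}_c A_a` over the polynomial
ring `ℂ[A_0,…,A_{n-1}]`. -/
theorem deriv_identity_monomial (n : ℕ) (f : Fin n → Fin n → Fin n → ℂ)
    (hanti : ∀ a b c, f a b c = - f b a c)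
    (hjac : ∀ i j k a, ∑ l, (f k l i * f j a l + f j l i * f a k l + f a l i * f k j l) = 0)
    (Ahat : Matrix (Fin n) (Fin n) (MvPolynomial (Fin n) ℂ))
    (hA : ∀ b c, Ahat b c = ∑ a, MvPolynomial.C (-Complex.I * f a b c) * MvPolynomial.X a)
    (m : ℕ) (j k l : Fin n) :
    MvPolynomial.C Complex.I * ∑ i, Ahat j i * MvPolynomial.pderiv i ((Ahat ^ m) k l) =
      ∑ i, (Ahat ^ m) k i * MvPolynomial.C (f i j l) +
      ∑ i, (Ahat ^ m) i l * MvPolynomial.C (f j k i) := by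
  induction m generalizing k l with
  | zero =>
    simp only [pow_zero, Matrix.one_apply]
    rw [show (∑ i, Ahat j i * pderiv i (if k = l then (1:MvPolynomial (Fin n) ℂ) else 0)) = 0
      from Finset.sum_eq_zero fun i _ => by split <;> simp, mul_zero]
    have e1 : ∀ i : Fin n, (if k = i then (1:MvPolynomial (Fin n) ℂ) else 0) * C (f i j l)
        = if k = i then C (f i j l) else 0 := fun i => by split <;> simp
    have e2 : ∀ i : Fin n, (if i = l then (1:MvPolynomial (Fin n) ℂ) else 0) * C (f j k i)
        = if i = l then C (f j k i) else 0 := fun i => by split <;> simp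
    rw [Finset.sum_congr rfl fun i _ => e1 i, Finset.sum_congr rfl fun i _ => e2 i,
      Finset.sum_ite_eq, Finset.sum_ite_eq', if_pos (Finset.mem_univ _),
      if_pos (Finset.mem_univ _), ← C_add, hanti k j l]
    simp
  | succ m ih =>
    rw [pow_succ]
    simp only [Matrix.mul_apply]
    have expand : C Complex.I * ∑ i, Ahat j i * pderiv i (∑ p, (Ahat ^ m) k p * Ahat p l)
        = ∑ p, ((C Complex.I * ∑ i, Ahat j i * pderiv i ((Ahat ^ m) k p)) * Ahat p l
          + (Ahat ^ m) k p * (C Complex.I * ∑ i, Ahat j i * pderiv i (Ahat p l))) := by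
      simp only [map_sum, pderiv_mul, Finset.mul_sum]
      rw [Finset.sum_comm]
      refine Finset.sum_congr rfl fun p _ => ?_
      rw [Finset.sum_mul, ← Finset.sum_add_distrib]
      exact Finset.sum_congr rfl fun i _ => by ring
    rw [expand, Finset.sum_congr rfl fun p _ => by
      rw [ih k p, key n f hanti hjac Ahat hA j p l]]
    -- now pure algebra
    simp only [add_mul, mul_add, Finset.sum_add_distrib, Finset.sum_mul, Finset.mul_sum]
    have hA2 : (∑ x, ∑ i, (Ahat ^ m) i x * C (f j k i) * Ahat x l)
        = ∑ x, ∑ i, (Ahat ^ m) x i * Ahat i l * C (f j k x) := by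
      rw [Finset.sum_comm]
      exact Finset.sum_congr rfl fun x _ => Finset.sum_congr rfl fun i _ => by ring
    have hA3 : (∑ x, ∑ i, (Ahat ^ m) k x * (Ahat x i * C (f i j l)))
        = ∑ x, ∑ i, (Ahat ^ m) k i * Ahat i x * C (f x j l) := by
      rw [Finset.sum_comm]
      exact Finset.sum_congr rfl fun x _ => Finset.sum_congr rfl fun i _ => by ring
    have hA14 : (∑ x, ∑ i, (Ahat ^ m) k i * C (f i j x) * Ahat x l)
        + (∑ x, ∑ i, (Ahat ^ m) k x * (Ahat i l * C (f j x i))) = 0 := by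
      rw [show (∑ x, ∑ i, (Ahat ^ m) k x * (Ahat i l * C (f j x i)))
          = ∑ x, ∑ i, (Ahat ^ m) k i * (Ahat x l * C (f j i x)) from Finset.sum_comm,
        ← Finset.sum_add_distrib]
      refine Finset.sum_eq_zero fun x _ => ?_
      rw [← Finset.sum_add_distrib]
      refine Finset.sum_eq_zero fun i _ => ?_
      rw [hanti i j x, map_neg]
      ring
    linear_combination hA2 + hA3 + hA14
end

section
/- Let S(X) = Σ_{m=0}^{d} c_m·X^m be an arbitrary polynomial with complex coefficients (the paper states the result for any function analytic at 0) and set S(Â) = Σ_{m=0}^{d} c_m·Â^m. Then for all indices j,k,l ∈ Fin n: i·Σ_i Â^j_i · ∂^i_A([S(Â)]^k_l) = Σ_i [S(Â)]^k_i · f^{ij}_l + Σ_i [S(Â)]^i_l · f^{jk}_i. -/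
/-!
For fixed `j`, `D := i ∑ᵢ Âʲᵢ ∂ⁱ` is a derivation of the polynomial ring, so applied entrywise
to matrices it obeys the Leibniz rule. The Jacobi identity says that the matrices
`Fₐ := (f a b c)_{b c}` satisfy `[F_j, F_b] = ∑ₐ f b j a • Fₐ`, which turns into
`D(Â) = [T, Â]` with `T := F_j`. Since `[T, ·]` is also a derivation of the matrix algebra,
`D(Âᵐ) = [T, Âᵐ]` for every `m`, hence `D(S(Â)) = [T, S(Â)]` by linearity; the `(k, l)` entry of
this identity is the claim, after `f j i l = -f i j l`.
-/

open MvPolynomial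

section Derivation

variable {R A ι : Type*} [CommRing R] [CommRing A] [Algebra R A] [Fintype ι]

theorem Derivation.matrixMap_mul (D : Derivation R A A) (M N : Matrix ι ι A) :
    (M * N).map D = M.map D * N + M * N.map D := by
  ext i k
  simp only [Matrix.map_apply, Matrix.mul_apply, Matrix.add_apply, map_sum, D.leibniz,
    smul_eq_mul, ← Finset.sum_add_distrib]
  exact Finset.sum_congr rfl fun _ _ => by ring

variable [DecidableEq ι]

theorem Derivation.matrixMap_pow_of_eq_commutator (D : Derivation R A A)
    {M T : Matrix ι ι A} (h : M.map D = T * M - M * T) (m : ℕ) :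
    (M ^ m).map D = T * M ^ m - M ^ m * T := by
  induction m with
  | zero => ext i k; simp [Matrix.one_apply, apply_ite D]
  | succ m ih =>
    rw [pow_succ, D.matrixMap_mul, ih, h]
    noncomm_ring

theorem Derivation.matrixMap_sum_smul_pow_of_eq_commutator (D : Derivation R A A)
    {M T : Matrix ι ι A} (h : M.map D = T * M - M * T) (s : Finset ℕ) (c : ℕ → R) :
    (∑ m ∈ s, c m • M ^ m).map D =
      T * ∑ m ∈ s, c m • M ^ m - (∑ m ∈ s, c m • M ^ m) * T := by
  change D.toLinearMap.mapMatrix _ = _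
  simp only [map_sum, Finset.mul_sum, Finset.sum_mul, ← Finset.sum_sub_distrib]
  refine Finset.sum_congr rfl fun m _ => ?_
  rw [_root_.map_smul, LinearMap.mapMatrix_apply, Derivation.coeFn_coe,
    D.matrixMap_pow_of_eq_commutator h, Matrix.mul_smul, Matrix.smul_mul, smul_sub]

end Derivation

theorem commutator_of_jacobi {K ι : Type*} [CommRing K] [Fintype ι] {f : ι → ι → ι → K}
    (hanti : ∀ a b c, f a b c = - f b a c)
    (hjac : ∀ i j k a, ∑ l, (f k l i * f j a l + f j l i * f a k l + f a l i * f k j l) = 0)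
    (a b : ι) :
    Matrix.of (f a) * Matrix.of (f b) - Matrix.of (f b) * Matrix.of (f a) =
      ∑ c, f b a c • Matrix.of (f c) := by
  ext k l
  simp only [Matrix.sub_apply, Matrix.mul_apply, Matrix.sum_apply, Matrix.smul_apply,
    Matrix.of_apply, smul_eq_mul]
  rw [← sub_eq_zero, ← Finset.sum_sub_distrib, ← Finset.sum_sub_distrib, ← hjac l b k a]
  refine Finset.sum_congr rfl fun c _ => ?_
  rw [hanti k c l, hanti k b c]
  ring

theorem matrixMap_eq_commutator_of_jacobi {n : ℕ} {f : Fin n → Fin n → Fin n → ℂ}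
    (hanti : ∀ a b c, f a b c = - f b a c)
    (hjac : ∀ i j k a, ∑ l, (f k l i * f j a l + f j l i * f a k l + f a l i * f k j l) = 0)
    {Ahat : Matrix (Fin n) (Fin n) (MvPolynomial (Fin n) ℂ)}
    (hA : ∀ b c, Ahat b c = ∑ a, C (-Complex.I * f a b c) * X a) {j : Fin n}
    (D : Derivation ℂ (MvPolynomial (Fin n) ℂ) (MvPolynomial (Fin n) ℂ))
    (hX : ∀ a, D (X a) = C Complex.I * Ahat j a) :
    Ahat.map D = (Matrix.of (f j)).map C * Ahat - Ahat * (Matrix.of (f j)).map C := by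
  have hA' : ∀ b c, Ahat b c = ∑ a, (-Complex.I * f a b c) • X a := fun b c => by
    simp only [hA, C_mul']
  have hDA : ∀ b c, D (Ahat b c) = ∑ a, f a b c • Ahat j a := by
    intro b c
    rw [hA' b c]
    simp only [map_sum, D.map_smul, hX, C_mul', smul_smul]
    refine Finset.sum_congr rfl fun a _ => ?_
    congr 1
    linear_combination -(f a b c) * Complex.I_mul_I
  refine Matrix.ext fun k l => ?_
  simp only [Matrix.map_apply, Matrix.sub_apply, Matrix.mul_apply, Matrix.of_apply, hDA, C_mul',
    mul_comm _ (C _)]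
  -- both sides are now `∑ b, (coefficient) • X b`; compare the coefficients
  simp only [hA', Finset.smul_sum, smul_smul, ← Finset.sum_sub_distrib, ← sub_smul]
  conv_lhs => rw [Finset.sum_comm]
  conv_rhs => rw [Finset.sum_comm]
  refine Finset.sum_congr rfl fun b _ => ?_
  simp only [← Finset.sum_smul]
  have h := congrFun (congrFun (commutator_of_jacobi hanti hjac j b) k) l
  simp only [Matrix.sub_apply, Matrix.mul_apply, Matrix.sum_apply, Matrix.smul_apply,
    Matrix.of_apply, smul_eq_mul] at h
  congr 1
  calc ∑ i, f i k l * (-Complex.I * f b j i) = -Complex.I * ∑ c, f b j c * f c k l := by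
        rw [Finset.mul_sum]; exact Finset.sum_congr rfl fun _ _ => by ring
    _ = -Complex.I * (∑ i, f j k i * f b i l - ∑ i, f b k i * f j i l) := by rw [h]
    _ = _ := by
        rw [← Finset.sum_sub_distrib, Finset.mul_sum]
        exact Finset.sum_congr rfl fun _ _ => by ring

/-- For an arbitrary polynomial `S(X) = Σ_{m=0}^d c_m X^m` with complex
coefficients and `S(Â) = Σ_{m=0}^d c_m Â^m`, the identity
`i Σ_i Â^j_i ∂^i_A([S(Â)]^k_l) = Σ_i [S(Â)]^k_i f^{ij}_l + Σ_i [S(Â)]^i_l f^{jk}_i` holds. -/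
theorem deriv_identity_polynomial (n : ℕ) (f : Fin n → Fin n → Fin n → ℂ)
    (hanti : ∀ a b c, f a b c = - f b a c)
    (hjac : ∀ i j k a, ∑ l, (f k l i * f j a l + f j l i * f a k l + f a l i * f k j l) = 0)
    (Ahat : Matrix (Fin n) (Fin n) (MvPolynomial (Fin n) ℂ))
    (hA : ∀ b c, Ahat b c = ∑ a, MvPolynomial.C (-Complex.I * f a b c) * MvPolynomial.X a)
    (d : ℕ) (c : ℕ → ℂ)
    (SA : Matrix (Fin n) (Fin n) (MvPolynomial (Fin n) ℂ))
    (hS : SA = ∑ m ∈ Finset.range (d + 1), (MvPolynomial.C (c m) : MvPolynomial (Fin n) ℂ) • Ahat ^ m)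
    (j k l : Fin n) :
    MvPolynomial.C Complex.I * ∑ i, Ahat j i * MvPolynomial.pderiv i (SA k l) =
      ∑ i, SA k i * MvPolynomial.C (f i j l) +
      ∑ i, SA i l * MvPolynomial.C (f j k i) := by
  let D : Derivation ℂ (MvPolynomial (Fin n) ℂ) (MvPolynomial (Fin n) ℂ) :=
    ∑ i, (C Complex.I * Ahat j i) • pderiv i
  have hD : ∀ p, D p = C Complex.I * ∑ i, Ahat j i * pderiv i p := by
    intro p
    rw [← Derivation.coeFnAddMonoidHom_apply, map_sum, Finset.sum_apply, Finset.mul_sum]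
    simp only [Derivation.coeFnAddMonoidHom_apply, Derivation.smul_apply, smul_eq_mul, mul_assoc]
  have hAhat := matrixMap_eq_commutator_of_jacobi hanti hjac hA (j := j) D fun a => by
    simp [hD, pderiv_X, Pi.single_apply]
  have hSA : SA.map D = (Matrix.of (f j)).map C * SA - SA * (Matrix.of (f j)).map C := by
    simp only [hS, ← algebraMap_eq, algebraMap_smul]
    exact D.matrixMap_sum_smul_pow_of_eq_commutator hAhat _ _
  have hkl := congrFun (congrFun hSA k) l
  simp only [Matrix.map_apply, Matrix.sub_apply, Matrix.mul_apply, Matrix.of_apply] at hkl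
  rw [← hD, hkl]
  simp only [hanti j _ l, map_neg, mul_neg, Finset.sum_neg_distrib, sub_neg_eq_add,
    mul_comm (C (f j k _))]
  exact add_comm _ _
end

section
/- Let γ, ρ : ℝⁿ → Matrix (Fin n) (Fin n) ℂ be differentiable matrix-valued functions such that ρ(A) is invertible for every A ∈ ℝⁿ. Then ρ satisfies the second master equation Σ_l (γ^j_l(A)·∂^l_A ρ^i_a(A) + ρ^l_a(A)·∂^i_A γ^j_l(A)) = 0 for all i,j,a and all A, if and only if the inverse matrix σ(A) = ρ(A)^{−1} satisfies Σ_i (γ^k_i(A)·∂^i_A σ^j_l(A) − σ^j_i(A)·∂^i_A γ^k_l(A)) = 0 for all j,k,l and all A. Here ∂^i_A denotes the partial derivative with respect to the i-th coordinate of A. -/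
/-! For a complex vector `v`, `f ↦ ∑ᵢ vᵢ ∂ⁱf` is a derivation. Let `Vⱼ` be the derivation along the
`j`-th row of `γ` and `Gⱼ = (∂ⁱ γʲₗ)ᵢₗ`. In matrix form the second master equation reads
`Vⱼ ρ = -Gⱼ ρ` and the equation for `σ = ρ⁻¹` reads `Vⱼ σ = σ Gⱼ`. Differentiating `ρ σ = 1` gives
`Vⱼ σ = -σ (Vⱼ ρ) σ`, and under this relation the two matrix equations are equivalent. -/

/-- Partial derivative with respect to the `i`-th coordinate of a complex-valued
function of `A ∈ ℝⁿ`. -/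
noncomputable def pdC {n : ℕ} (i : Fin n) (g : (Fin n → ℝ) → ℂ) (A : Fin n → ℝ) : ℂ :=
  fderiv ℝ g A (Pi.single i 1)

open Finset Matrix

section Differentiability

variable {E : Type*} [NormedAddCommGroup E] [NormedSpace ℝ E] {m : Type*} [Fintype m]
  [DecidableEq m] {M : E → Matrix m m ℂ}

theorem differentiable_det (hM : ∀ p q, Differentiable ℝ fun x => M x p q) :
    Differentiable ℝ fun x => (M x).det := by
  simp only [det_apply, Units.smul_def, zsmul_eq_mul]
  exact Differentiable.fun_sum fun σ _ => (differentiable_const _).mul fun x =>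
    (HasFDerivAt.finsetProd fun p _ => (hM _ _ x).hasFDerivAt).differentiableAt

theorem differentiable_adjugate_apply (hM : ∀ p q, Differentiable ℝ fun x => M x p q)
    (p q : m) : Differentiable ℝ fun x => (M x).adjugate p q := by
  simp only [adjugate_apply]
  refine differentiable_det fun r s => ?_
  by_cases hr : r = q
  · subst hr
    simp only [updateRow_self]
    exact differentiable_const _
  · simpa only [updateRow_ne hr] using hM r s

theorem differentiable_nonsing_inv_apply (hM : ∀ p q, Differentiable ℝ fun x => M x p q)
    (hunit : ∀ x, IsUnit (M x)) (p q : m) : Differentiable ℝ fun x => (M x)⁻¹ p q := by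
  have hdet : ∀ x, (M x).det ≠ 0 := fun x => ((isUnit_iff_isUnit_det _).mp (hunit x)).ne_zero
  simp only [Matrix.inv_def, Ring.inverse_eq_inv', Matrix.smul_apply, smul_eq_mul]
  exact ((differentiable_det hM).inv hdet).mul (differentiable_adjugate_apply hM p q)

end Differentiability

section DirectionalDerivative

variable {n : ℕ}

theorem pdC_const (i : Fin n) (c : ℂ) (A : Fin n → ℝ) : pdC i (fun _ => c) A = 0 := by
  simp [pdC]

theorem pdC_sum {ι : Type*} (s : Finset ι) (i : Fin n) {f : ι → (Fin n → ℝ) → ℂ}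
    (hf : ∀ m ∈ s, Differentiable ℝ (f m)) (A : Fin n → ℝ) :
    pdC i (fun B => ∑ m ∈ s, f m B) A = ∑ m ∈ s, pdC i (f m) A := by
  simp [pdC, fderiv_fun_sum fun m hm => (hf m hm).differentiableAt]

theorem pdC_mul (i : Fin n) {f g : (Fin n → ℝ) → ℂ} (hf : Differentiable ℝ f)
    (hg : Differentiable ℝ g) (A : Fin n → ℝ) :
    pdC i (fun B => f B * g B) A = pdC i f A * g A + f A * pdC i g A := by
  simp only [pdC, fderiv_fun_mul hf.differentiableAt hg.differentiableAt, _root_.add_apply,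
    _root_.smul_apply, smul_eq_mul]
  ring

/-- `∑ᵢ vᵢ ∂ⁱ` for a complex vector `v`, which `fderiv ℝ` cannot express directly. -/
noncomputable def vderiv (v : Fin n → ℂ) (f : (Fin n → ℝ) → ℂ) (A : Fin n → ℝ) : ℂ :=
  ∑ i, v i * pdC i f A

theorem vderiv_const (v : Fin n → ℂ) (c : ℂ) (A : Fin n → ℝ) : vderiv v (fun _ => c) A = 0 := by
  simp [vderiv, pdC_const]

theorem vderiv_sum {ι : Type*} (s : Finset ι) (v : Fin n → ℂ) {f : ι → (Fin n → ℝ) → ℂ}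
    (hf : ∀ m ∈ s, Differentiable ℝ (f m)) (A : Fin n → ℝ) :
    vderiv v (fun B => ∑ m ∈ s, f m B) A = ∑ m ∈ s, vderiv v (f m) A := by
  simp only [vderiv, pdC_sum s _ hf, mul_sum]
  exact sum_comm

theorem vderiv_mul (v : Fin n → ℂ) {f g : (Fin n → ℝ) → ℂ} (hf : Differentiable ℝ f)
    (hg : Differentiable ℝ g) (A : Fin n → ℝ) :
    vderiv v (fun B => f B * g B) A = vderiv v f A * g A + f A * vderiv v g A := by
  simp only [vderiv, pdC_mul _ hf hg, mul_sum, sum_mul, ← sum_add_distrib]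
  exact sum_congr rfl fun i _ => by ring

end DirectionalDerivative

section MatrixDerivative

noncomputable def vderivMat {n : ℕ} {ι κ : Type*} (v : Fin n → ℂ)
    (M : (Fin n → ℝ) → Matrix ι κ ℂ) (A : Fin n → ℝ) : Matrix ι κ ℂ :=
  of fun p q => vderiv v (fun B => M B p q) A

variable {n : ℕ} (v : Fin n → ℂ) (A : Fin n → ℝ)

theorem vderivMat_const {ι κ : Type*} (C : Matrix ι κ ℂ) : vderivMat v (fun _ => C) A = 0 := by
  ext p q
  exact vderiv_const v _ A

theorem vderivMat_mul {ι κ μ : Type*} [Fintype κ] {M : (Fin n → ℝ) → Matrix ι κ ℂ}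
    {N : (Fin n → ℝ) → Matrix κ μ ℂ} (hM : ∀ p q, Differentiable ℝ fun B => M B p q)
    (hN : ∀ p q, Differentiable ℝ fun B => N B p q) :
    vderivMat v (fun B => M B * N B) A = vderivMat v M A * N A + M A * vderivMat v N A := by
  ext p q
  simp only [vderivMat, mul_apply, of_apply, Matrix.add_apply]
  rw [vderiv_sum _ v (f := fun r B => M B p r * N B r q) fun r _ => (hM p r).mul (hN r q),
    ← sum_add_distrib]
  exact sum_congr rfl fun r _ => vderiv_mul v (hM p r) (hN r q) A

theorem vderivMat_nonsing_inv {m : Type*} [Fintype m] [DecidableEq m]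
    {M : (Fin n → ℝ) → Matrix m m ℂ} (hM : ∀ p q, Differentiable ℝ fun B => M B p q)
    (hunit : ∀ B, IsUnit (M B)) :
    vderivMat v (fun B => (M B)⁻¹) A = -((M A)⁻¹ * vderivMat v M A * (M A)⁻¹) := by
  have hdet : ∀ B, IsUnit (M B).det := fun B => (isUnit_iff_isUnit_det _).mp (hunit B)
  have h := vderivMat_mul v A hM (differentiable_nonsing_inv_apply hM hunit)
  simp only [fun B => mul_nonsing_inv (M B) (hdet B), vderivMat_const] at h
  calc vderivMat v (fun B => (M B)⁻¹) A
      = (M A)⁻¹ * (M A * vderivMat v (fun B => (M B)⁻¹) A) := by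
        rw [← Matrix.mul_assoc, nonsing_inv_mul _ (hdet A), Matrix.one_mul]
    _ = -((M A)⁻¹ * vderivMat v M A * (M A)⁻¹) := by
        rw [eq_neg_of_add_eq_zero_right h.symm]
        noncomm_ring

end MatrixDerivative

theorem eq_neg_mul_iff_of_eq_neg_conj {R : Type*} [Ring R] {ρ σ X Y G : R} (h₁ : σ * ρ = 1)
    (h₂ : ρ * σ = 1) (hY : Y = -(σ * X * σ)) : X = -(G * ρ) ↔ Y = σ * G := by
  constructor
  · rintro rfl
    simp [hY, mul_assoc, h₂]
  · intro hY'
    have hX : X = -(ρ * Y * ρ) := by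
      simp [hY, ← mul_assoc, h₂, mul_assoc _ σ ρ, h₁]
    simp [hX, hY', ← mul_assoc, h₂]

section MasterEquations

variable {n : ℕ} (γ : (Fin n → ℝ) → Matrix (Fin n) (Fin n) ℂ) (A : Fin n → ℝ)

noncomputable def rowJacobian (j : Fin n) : Matrix (Fin n) (Fin n) ℂ :=
  of fun i l => pdC i (fun B => γ B j l) A

theorem second_master_iff_vderivMat (ρ : (Fin n → ℝ) → Matrix (Fin n) (Fin n) ℂ) :
    (∀ i j a : Fin n,
        ∑ l, (γ A j l * pdC l (fun B => ρ B i a) A + ρ A l a * pdC i (fun B => γ B j l) A) = 0) ↔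
      ∀ j, vderivMat (γ A j) ρ A = -(rowJacobian γ A j * ρ A) := by
  rw [forall_comm]
  refine forall_congr' fun j => ?_
  simp only [← Matrix.ext_iff, vderivMat, vderiv, rowJacobian, of_apply, Matrix.neg_apply,
    mul_apply, sum_add_distrib, add_eq_zero_iff_eq_neg, mul_comm (ρ A _ _)]

theorem inverse_master_iff_vderivMat (σ : (Fin n → ℝ) → Matrix (Fin n) (Fin n) ℂ) :
    (∀ j k l : Fin n,
        ∑ i, (γ A k i * pdC i (fun B => σ B j l) A - σ A j i * pdC i (fun B => γ B k l) A) = 0) ↔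
      ∀ k, vderivMat (γ A k) σ A = σ A * rowJacobian γ A k := by
  rw [forall_comm]
  refine forall_congr' fun k => ?_
  simp only [← Matrix.ext_iff, vderivMat, vderiv, rowJacobian, of_apply, mul_apply,
    sum_sub_distrib, sub_eq_zero]

end MasterEquations

theorem second_master_iff_inverse_general (n : ℕ)
    (γ ρ : (Fin n → ℝ) → Matrix (Fin n) (Fin n) ℂ)
    (hρdiff : ∀ i j, Differentiable ℝ (fun A => ρ A i j))
    (hρunit : ∀ A, IsUnit (ρ A)) :
    (∀ A : Fin n → ℝ, ∀ i j a : Fin n,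
        ∑ l, (γ A j l * pdC l (fun B => ρ B i a) A + ρ A l a * pdC i (fun B => γ B j l) A) = 0)
      ↔
    (∀ A : Fin n → ℝ, ∀ j k l : Fin n,
        ∑ i, (γ A k i * pdC i (fun B => (ρ B)⁻¹ j l) A
            - (ρ A)⁻¹ j i * pdC i (fun B => γ B k l) A) = 0) := by
  refine forall_congr' fun A => ?_
  rw [second_master_iff_vderivMat, inverse_master_iff_vderivMat]
  refine forall_congr' fun j => ?_
  have hdet := (isUnit_iff_isUnit_det _).mp (hρunit A)
  exact eq_neg_mul_iff_of_eq_neg_conj (nonsing_inv_mul _ hdet) (mul_nonsing_inv _ hdet)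
    (vderivMat_nonsing_inv _ A hρdiff hρunit)

/-- For differentiable matrix-valued functions `γ, ρ : ℝⁿ → Mat_n(ℂ)` with
`ρ(A)` invertible for every `A`, `ρ` satisfies the second master equation
`Σ_l (γ^j_l ∂^l_A ρ^i_a + ρ^l_a ∂^i_A γ^j_l) = 0` everywhere if and only if
`σ(A) = ρ(A)⁻¹` satisfies `Σ_i (γ^k_i ∂^i_A σ^j_l - σ^j_i ∂^i_A γ^k_l) = 0` everywhere. -/
theorem second_master_iff_inverse (n : ℕ)
    (γ ρ : (Fin n → ℝ) → Matrix (Fin n) (Fin n) ℂ)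
    (hγdiff : ∀ i j, Differentiable ℝ (fun A => γ A i j))
    (hρdiff : ∀ i j, Differentiable ℝ (fun A => ρ A i j))
    (hρunit : ∀ A, IsUnit (ρ A)) :
    (∀ A : Fin n → ℝ, ∀ i j a : Fin n,
        ∑ l, (γ A j l * pdC l (fun B => ρ B i a) A + ρ A l a * pdC i (fun B => γ B j l) A) = 0)
      ↔
    (∀ A : Fin n → ℝ, ∀ j k l : Fin n,
        ∑ i, (γ A k i * pdC i (fun B => (ρ B)⁻¹ j l) A
            - (ρ A)⁻¹ j i * pdC i (fun B => γ B k l) A) = 0) :=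
  second_master_iff_inverse_general n γ ρ hρdiff hρunit
end

section
/- Fix λ, β ∈ ℝ and A ∈ ℝ⁴ (indices μ,ν,ρ ∈ {0,1,2,3}). Let f^{μν}_ρ = −λ·ε^{μνs}·β̌_{sρ} when μ,ν,ρ ∈ {1,2,3} and f^{μν}_ρ = 0 whenever any index equals 0, where β̌ = diag(1,1,β) and ε is the 3-dimensional Levi-Civita symbol. Let Â be the 4×4 complex matrix with entries Â^ν_μ = −i·Σ_ρ f^{ρν}_μ·A_ρ, and set Z_β = β·A_1² + β·A_2² + A_3². Then: (i) [Â²]^ν_μ = λ²·(Z_β·𝛅^ν_μ − 𝐀_β^ν·𝐀_μ), where 𝛅^ν_μ equals δ^ν_μ if μ,ν ∈ {1,2,3} and 0 if μ = 0 or ν = 0, 𝐀_β = (0, β·A_1, β·A_2, A_3), and 𝐀 = (0, A_1, A_2, A_3); (ii) for every m ≥ 1, Â^{2m} = (λ²·Z_β)^{m−1}·Â² and Â^{2m+1} = (λ²·Z_β)^m·Â. -/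
/-- The three-dimensional Levi-Civita symbol embedded into the spatial indices
`{1,2,3}` of `Fin 4` (with `ε^{123} = 1`); it vanishes whenever any index equals `0`. -/
noncomputable def eps4 (i j k : Fin 4) : ℝ :=
  if i = 0 ∨ j = 0 ∨ k = 0 then 0
  else (((j : ℕ) : ℝ) - ((i : ℕ) : ℝ)) * (((k : ℕ) : ℝ) - ((j : ℕ) : ℝ))
    * (((k : ℕ) : ℝ) - ((i : ℕ) : ℝ)) / 2

/-- For the family of linear Poisson structures with structure constants
`f^{μν}_ρ = −λ ε^{μνs} β̌_{sρ}` (`β̌ = diag(1,1,β)` on spatial indices, vanishing if any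
index is `0`) and `Â^ν_μ = −i Σ_ρ f^{ρν}_μ A_ρ`:
(i) `[Â²]^ν_μ = λ²(Z_β 𝛅^ν_μ − 𝐀_β^ν 𝐀_μ)` where `Z_β = βA₁² + βA₂² + A₃²`,
`𝐀_β = (0, βA₁, βA₂, A₃)`, `𝐀 = (0, A₁, A₂, A₃)`;
(ii) for every `m ≥ 1`, `Â^{2m} = (λ²Z_β)^{m−1} Â²` and `Â^{2m+1} = (λ²Z_β)^m Â`. -/
theorem four_dim_commutative_time_powers (lam β : ℝ) (A : Fin 4 → ℝ)
    (f : Fin 4 → Fin 4 → Fin 4 → ℝ)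
    (hf : ∀ μ ν ρ, f μ ν ρ = -lam * eps4 μ ν ρ * (![0, 1, 1, β] ρ))
    (Ahat : Matrix (Fin 4) (Fin 4) ℂ)
    (hA : ∀ ν μ, Ahat ν μ = -Complex.I * ∑ ρ, (f ρ ν μ : ℂ) * (A ρ : ℂ))
    (Zβ : ℝ) (hZ : Zβ = β * (A 1) ^ 2 + β * (A 2) ^ 2 + (A 3) ^ 2)
    (Aβ : Fin 4 → ℝ) (hAβ : Aβ = ![0, β * A 1, β * A 2, A 3])
    (Abold : Fin 4 → ℝ) (hAbold : Abold = ![0, A 1, A 2, A 3]) :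
    (∀ ν μ, (Ahat ^ 2) ν μ =
        (lam : ℂ) ^ 2 * ((Zβ : ℂ) * (if ν = μ ∧ ν ≠ 0 then 1 else 0)
          - (Aβ ν : ℂ) * (Abold μ : ℂ))) ∧
    (∀ m : ℕ, 1 ≤ m →
        Ahat ^ (2 * m) = (((lam : ℂ) ^ 2 * (Zβ : ℂ)) ^ (m - 1)) • Ahat ^ 2 ∧
        Ahat ^ (2 * m + 1) = (((lam : ℂ) ^ 2 * (Zβ : ℂ)) ^ m) • Ahat) := by
  have h2' : ((2:Fin 4):ℕ) = 2 := rfl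
  have h3' : ((3:Fin 4):ℕ) = 3 := rfl
  have hE : Ahat = !![0,0,0,0;
      0, 0, Complex.I*lam*(A 3), -(Complex.I*lam*(β*A 2));
      0, -(Complex.I*lam*(A 3)), 0, Complex.I*lam*(β*A 1);
      0, Complex.I*lam*(A 2), -(Complex.I*lam*(A 1)), 0] := by
    ext ν μ
    rw [hA]
    fin_cases ν <;> fin_cases μ <;>
      simp [hf, eps4, Fin.sum_univ_four, Matrix.vecHead, Matrix.vecTail, h2', h3'] <;>
      push_cast <;> ring
  have key2 : ∀ ν μ, (Ahat ^ 2) ν μ =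
      (lam : ℂ) ^ 2 * ((Zβ : ℂ) * (if ν = μ ∧ ν ≠ 0 then 1 else 0)
        - (Aβ ν : ℂ) * (Abold μ : ℂ)) := by
    intro ν μ
    rw [pow_two, hE, hZ, hAβ, hAbold, Matrix.mul_apply]
    fin_cases ν <;> fin_cases μ <;>
      simp [Fin.sum_univ_four, Matrix.vecHead, Matrix.vecTail] <;>
      push_cast <;> ring_nf <;> simp [Complex.I_sq] <;> push_cast <;> ring
  have key3 : Ahat ^ 3 = ((lam : ℂ) ^ 2 * (Zβ : ℂ)) • Ahat := by
    ext ν μ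
    rw [pow_succ, Matrix.mul_apply]
    simp only [key2]
    rw [hE, hZ, hAβ, hAbold]
    fin_cases ν <;> fin_cases μ <;>
      simp [Fin.sum_univ_four, Matrix.vecHead, Matrix.vecTail] <;>
      push_cast <;> ring
  refine ⟨key2, ?_⟩
  intro m hm
  induction m with
  | zero => omega
  | succ n ih =>
    rcases Nat.eq_or_lt_of_le hm with h1 | h1
    · constructor
      · rw [← h1]; norm_num
      · rw [← h1]; norm_num [key3]
    · have hn : 1 ≤ n := by omega
      obtain ⟨ihe, iho⟩ := ih hn
      have heven : Ahat ^ (2 * (n+1)) = (((lam:ℂ)^2 * Zβ) ^ n) • Ahat ^ 2 := by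
        have h : 2 * (n+1) = (2*n+1) + 1 := by ring
        rw [h, pow_succ, iho, Matrix.smul_mul, ← pow_two]
      constructor
      · simpa using heven
      · have h : 2 * (n+1) + 1 = (2*(n+1)) + 1 := rfl
        rw [h, pow_succ, heven, Matrix.smul_mul, ← pow_succ, key3, smul_smul,
          ← pow_succ]
end

section
/- Fix N ∈ ℕ and ω ∈ ℝᴺ, and let f^{aj}_k = 2(ω^a·δ^j_k − ω^j·δ^a_k) be the κ-Minkowski structure constants. Define, on the open set U = {A ∈ ℝᴺ : ω·A ≠ 0}, the matrix-valued function γ with entries γ^i_j(A) = (ω·A)·(1 + coth(ω·A))·δ^i_j + ((1 − (ω·A) − (ω·A)·coth(ω·A))/(ω·A))·ω^i·A_j. Then γ is differentiable on U and satisfies the first master equation of the linear Poisson gauge theory at every point of U: Σ_i (γ^j_i(A)·∂^i_A γ^k_l(A) − γ^k_i(A)·∂^i_A γ^j_l(A)) = Σ_i γ^i_l(A)·f^{jk}_i for all j,k,l. -/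
/-!
For an ansatz `γ^i_j(A) = G(t) δ^i_j + H(t) ω^i A_j` with `t = ω·A`, one has
`∂^i γ^k_l = (G' δ^k_l + H' ω^k A_l) ω^i + H ω^k δ^i_l`. In the antisymmetrised sum of the master
equation every term proportional to `ω^j ω^k` cancels (in particular all `H'`-terms), leaving
`(G' (G + H t) - G H)(ω^j δ^k_l - ω^k δ^j_l)`, while the right-hand side is
`2 G (ω^j δ^k_l - ω^k δ^j_l)`. The κ-Minkowski choice satisfies `G + H t = 1`, so the master
equation reduces to the ODE `G' - G H = 2 G`, which `G(t) = t (1 + coth t)` solves.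
-/

/-- Partial derivative with respect to the `i`-th coordinate of a real-valued function
of `A ∈ ℝᴺ`. -/
noncomputable def pd {N : ℕ} (i : Fin N) (g : (Fin N → ℝ) → ℝ) (A : Fin N → ℝ) : ℝ :=
  fderiv ℝ g A (Pi.single i 1)

open scoped Matrix
open ContinuousLinearMap (proj)

section LinearAnsatz

variable {N : ℕ}

theorem HasFDerivAt.pd_eq {g : (Fin N → ℝ) → ℝ} {g' : (Fin N → ℝ) →L[ℝ] ℝ} {A : Fin N → ℝ}
    (h : HasFDerivAt g g' A) (i : Fin N) : pd i g A = g' (Pi.single i 1) := by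
  rw [pd, h.fderiv]

theorem hasFDerivAt_dotProduct (ω A : Fin N → ℝ) :
    HasFDerivAt (fun B => ω ⬝ᵥ B) (∑ s, ω s • (proj s : (Fin N → ℝ) →L[ℝ] ℝ)) A :=
  HasFDerivAt.fun_sum fun s _ => (hasFDerivAt_apply s A).const_smul (ω s)

variable (ω : Fin N → ℝ)

def kappaStructureConst (a j k : Fin N) : ℝ :=
  2 * (ω a * (if j = k then 1 else 0) - ω j * (if a = k then 1 else 0))

def linearAnsatz (G H : ℝ → ℝ) (A : Fin N → ℝ) (i j : Fin N) : ℝ :=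
  G (ω ⬝ᵥ A) * (if i = j then 1 else 0) + H (ω ⬝ᵥ A) * ω i * A j

variable {ω} {G H : ℝ → ℝ} {G' H' : ℝ} {A : Fin N → ℝ}

theorem hasFDerivAt_linearAnsatz (hG : HasDerivAt G G' (ω ⬝ᵥ A))
    (hH : HasDerivAt H H' (ω ⬝ᵥ A)) (k l : Fin N) :
    HasFDerivAt (fun B => linearAnsatz ω G H B k l)
      ((G' * (if k = l then 1 else 0) + H' * ω k * A l) • ∑ s, ω s • (proj s : (Fin N → ℝ) →L[ℝ] ℝ)
        + (H (ω ⬝ᵥ A) * ω k) • (proj l : (Fin N → ℝ) →L[ℝ] ℝ)) A := by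
  have hL := hasFDerivAt_dotProduct ω A
  refine (((hG.comp_hasFDerivAt A hL).mul_const _).add
    (((hH.comp_hasFDerivAt A hL).mul_const (ω k)).mul (hasFDerivAt_apply l A))).congr_fderiv ?_
  ext v
  simp only [add_apply, smul_apply, smul_eq_mul, Function.comp_apply]
  ring

theorem pd_linearAnsatz (hG : HasDerivAt G G' (ω ⬝ᵥ A))
    (hH : HasDerivAt H H' (ω ⬝ᵥ A)) (i k l : Fin N) :
    pd i (fun B => linearAnsatz ω G H B k l) A
      = (G' * (if k = l then 1 else 0) + H' * ω k * A l) * ω i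
        + H (ω ⬝ᵥ A) * ω k * (if i = l then 1 else 0) := by
  rw [(hasFDerivAt_linearAnsatz hG hH k l).pd_eq]
  simp [Pi.single_apply, eq_comm]

theorem sum_linearAnsatz_mul (a b : ℝ) (j l : Fin N) :
    ∑ i, linearAnsatz ω G H A j i * (a * ω i + b * (if i = l then 1 else 0))
      = G (ω ⬝ᵥ A) * (a * ω j + b * (if j = l then 1 else 0))
        + H (ω ⬝ᵥ A) * ω j * (a * (ω ⬝ᵥ A) + b * A l) := by
  have hdot : ∑ i, H (ω ⬝ᵥ A) * ω j * A i * (a * ω i) = H (ω ⬝ᵥ A) * ω j * a * (ω ⬝ᵥ A) := by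
    rw [dotProduct, Finset.mul_sum]
    exact Finset.sum_congr rfl fun i _ => by ring
  simp only [linearAnsatz, add_mul, mul_add, Finset.sum_add_distrib, hdot, ite_mul, zero_mul,
    mul_ite, mul_one, mul_zero, Finset.sum_ite_eq, Finset.sum_ite_eq', Finset.mem_univ, if_true]
  split_ifs <;> ring

theorem sum_linearAnsatz_mul_kappaStructureConst (j k l : Fin N) :
    ∑ i, linearAnsatz ω G H A i l * kappaStructureConst ω j k i
      = 2 * G (ω ⬝ᵥ A) * (ω j * (if k = l then 1 else 0) - ω k * (if j = l then 1 else 0)) := by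
  simp only [linearAnsatz, kappaStructureConst, add_mul, mul_sub, Finset.sum_sub_distrib, mul_ite,
    mul_one, mul_zero, Finset.sum_ite_eq, Finset.mem_univ, if_true]
  split_ifs <;> ring

theorem linearAnsatz_firstMaster (hG : HasDerivAt G G' (ω ⬝ᵥ A))
    (hH : HasDerivAt H H' (ω ⬝ᵥ A))
    (hode : G' * (G (ω ⬝ᵥ A) + H (ω ⬝ᵥ A) * (ω ⬝ᵥ A)) - G (ω ⬝ᵥ A) * H (ω ⬝ᵥ A)
      = 2 * G (ω ⬝ᵥ A)) (j k l : Fin N) :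
    ∑ i, (linearAnsatz ω G H A j i * pd i (fun B => linearAnsatz ω G H B k l) A
        - linearAnsatz ω G H A k i * pd i (fun B => linearAnsatz ω G H B j l) A)
      = ∑ i, linearAnsatz ω G H A i l * kappaStructureConst ω j k i := by
  simp only [pd_linearAnsatz hG hH, Finset.sum_sub_distrib,
    sum_linearAnsatz_mul, sum_linearAnsatz_mul_kappaStructureConst]
  linear_combination (ω j * (if k = l then 1 else 0) - ω k * (if j = l then 1 else 0)) * hode

end LinearAnsatz

section KappaMinkowski

open Real

noncomputable def kappaG (t : ℝ) : ℝ := t * (1 + cosh t / sinh t)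

noncomputable def kappaH (t : ℝ) : ℝ := (1 - t - t * (cosh t / sinh t)) / t

theorem hasDerivAt_kappaG {t : ℝ} (ht : t ≠ 0) :
    HasDerivAt kappaG (1 + cosh t / sinh t + t * (1 - (cosh t / sinh t) ^ 2)) t := by
  have hs : sinh t ≠ 0 := sinh_ne_zero.mpr ht
  refine ((hasDerivAt_id' t).mul
    (((hasDerivAt_cosh t).fun_div (hasDerivAt_sinh t) hs).const_add 1)).congr_deriv ?_
  field_simp

theorem differentiableAt_kappaH {t : ℝ} (ht : t ≠ 0) : DifferentiableAt ℝ kappaH t := by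
  have hs : sinh t ≠ 0 := sinh_ne_zero.mpr ht
  unfold kappaH
  fun_prop (disch := assumption)

theorem kappaG_add_kappaH_mul_self {t : ℝ} (ht : t ≠ 0) : kappaG t + kappaH t * t = 1 := by
  unfold kappaG kappaH
  field_simp
  ring

theorem kappaG_ode {t : ℝ} (ht : t ≠ 0) :
    (1 + cosh t / sinh t + t * (1 - (cosh t / sinh t) ^ 2)) - kappaG t * kappaH t
      = 2 * kappaG t := by
  have hs : sinh t ≠ 0 := sinh_ne_zero.mpr ht
  unfold kappaG kappaH
  field_simp
  ring

end KappaMinkowski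

/-- For the κ-Minkowski structure constants
`f^{aj}_k = 2(ω^a δ^j_k − ω^j δ^a_k)`, the matrix-valued function
`γ^i_j(A) = (ω·A)(1 + coth(ω·A)) δ^i_j + ((1 − (ω·A) − (ω·A)coth(ω·A))/(ω·A)) ω^i A_j`
is differentiable on `U = {A : ω·A ≠ 0}` and satisfies the first master equation
`Σ_i (γ^j_i ∂^i_A γ^k_l − γ^k_i ∂^i_A γ^j_l) = Σ_i γ^i_l f^{jk}_i` at every point of `U`. -/
theorem kappa_minkowski_gamma_first_master (N : ℕ) (ω : Fin N → ℝ)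
    (f : Fin N → Fin N → Fin N → ℝ)
    (hf : ∀ a j k, f a j k =
      2 * (ω a * (if j = k then 1 else 0) - ω j * (if a = k then 1 else 0)))
    (γ : (Fin N → ℝ) → Fin N → Fin N → ℝ)
    (hγ : ∀ A i j, γ A i j =
      (∑ s, ω s * A s) *
          (1 + Real.cosh (∑ s, ω s * A s) / Real.sinh (∑ s, ω s * A s)) *
          (if i = j then 1 else 0)
      + ((1 - (∑ s, ω s * A s)
            - (∑ s, ω s * A s) * (Real.cosh (∑ s, ω s * A s) / Real.sinh (∑ s, ω s * A s)))
          / (∑ s, ω s * A s)) * ω i * A j) :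
    (∀ A : Fin N → ℝ, (∑ s, ω s * A s) ≠ 0 →
        ∀ i j, DifferentiableAt ℝ (fun B => γ B i j) A) ∧
    (∀ A : Fin N → ℝ, (∑ s, ω s * A s) ≠ 0 → ∀ j k l,
        ∑ i, (γ A j i * pd i (fun B => γ B k l) A - γ A k i * pd i (fun B => γ B j l) A)
          = ∑ i, γ A i l * f j k i) := by
  obtain rfl : γ = linearAnsatz ω kappaG kappaH := funext fun A => funext fun i => funext (hγ A i)
  obtain rfl : f = kappaStructureConst ω := funext fun a => funext fun j => funext (hf a j)
  have hG {A : Fin N → ℝ} (hA : ω ⬝ᵥ A ≠ 0) := hasDerivAt_kappaG hA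
  have hH {A : Fin N → ℝ} (hA : ω ⬝ᵥ A ≠ 0) := (differentiableAt_kappaH hA).hasDerivAt
  refine ⟨fun A hA i j => (hasFDerivAt_linearAnsatz (hG hA) (hH hA) i j).differentiableAt,
    fun A (hA : ω ⬝ᵥ A ≠ 0) j k l => linearAnsatz_firstMaster (hG hA) (hH hA) ?_ j k l⟩
  rw [kappaG_add_kappaH_mul_self hA, mul_one]
  exact kappaG_ode hA
end

section
/- Fix α ∈ ℝ and A ∈ ℝ³, set Z₁ = A_1² + A_2² + A_3², and assume 0 < α·√Z₁ < π/2. Define Ã ∈ ℝ³ by Ã_i = A_i·tan(α·√Z₁)/(α·√Z₁), and set Z̃₁ = Ã_1² + Ã_2² + Ã_3². Then α·√Z̃₁ = tan(α·√Z₁) and A_j = Ã_j·arctan(α·√Z̃₁)/(α·√Z̃₁) for every j; i.e., the su(2) Seiberg–Witten field redefinition Ã(A) is inverted by A_j = Ã_j·arctan(α·√Z̃₁)/(α·√Z̃₁). -/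
/-- su(2) Seiberg–Witten map. With `Z₁ = A₁² + A₂² + A₃²`,
`0 < α√Z₁ < π/2`, and `Ã_i = A_i tan(α√Z₁)/(α√Z₁)`, one has
`α√Z̃₁ = tan(α√Z₁)` and `A_j = Ã_j arctan(α√Z̃₁)/(α√Z̃₁)` for every `j`, where
`Z̃₁ = Ã₁² + Ã₂² + Ã₃²`. -/
theorem su2_SW_map_inverse (α : ℝ) (A : Fin 3 → ℝ)
    (h1 : 0 < α * Real.sqrt ((A 0) ^ 2 + (A 1) ^ 2 + (A 2) ^ 2))
    (h2 : α * Real.sqrt ((A 0) ^ 2 + (A 1) ^ 2 + (A 2) ^ 2) < Real.pi / 2)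
    (At : Fin 3 → ℝ)
    (hAt : ∀ i, At i = A i * Real.tan (α * Real.sqrt ((A 0) ^ 2 + (A 1) ^ 2 + (A 2) ^ 2))
        / (α * Real.sqrt ((A 0) ^ 2 + (A 1) ^ 2 + (A 2) ^ 2))) :
    α * Real.sqrt ((At 0) ^ 2 + (At 1) ^ 2 + (At 2) ^ 2)
        = Real.tan (α * Real.sqrt ((A 0) ^ 2 + (A 1) ^ 2 + (A 2) ^ 2)) ∧
    ∀ j, A j = At j * Real.arctan (α * Real.sqrt ((At 0) ^ 2 + (At 1) ^ 2 + (At 2) ^ 2))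
        / (α * Real.sqrt ((At 0) ^ 2 + (At 1) ^ 2 + (At 2) ^ 2)) := by
  set Z : ℝ := (A 0) ^ 2 + (A 1) ^ 2 + (A 2) ^ 2 with hZ
  set x : ℝ := α * Real.sqrt Z with hx
  have hxpos : 0 < x := h1
  have htanpos : 0 < Real.tan x := Real.tan_pos_of_pos_of_lt_pi_div_two hxpos h2
  have hc : 0 ≤ Real.tan x / x := le_of_lt (div_pos htanpos hxpos)
  have hZt : (At 0) ^ 2 + (At 1) ^ 2 + (At 2) ^ 2 = Z * (Real.tan x / x) ^ 2 := by
    rw [hAt 0, hAt 1, hAt 2]; ring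
  have hαpos : 0 < α := by
    rcases lt_trichotomy α 0 with h | h | h
    · exfalso
      have : Real.sqrt Z ≥ 0 := Real.sqrt_nonneg _
      nlinarith
    · simp [hx, h] at hxpos
    · exact h
  have hsqrtZ : Real.sqrt Z = x / α := by
    rw [hx]; field_simp
  have hsqrt : Real.sqrt ((At 0) ^ 2 + (At 1) ^ 2 + (At 2) ^ 2)
      = Real.sqrt Z * (Real.tan x / x) := by
    rw [hZt, Real.sqrt_mul (by positivity), Real.sqrt_sq hc]
  have key : α * Real.sqrt ((At 0) ^ 2 + (At 1) ^ 2 + (At 2) ^ 2) = Real.tan x := by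
    rw [hsqrt, hsqrtZ]
    field_simp
  refine ⟨key, fun j => ?_⟩
  rw [key, Real.arctan_tan (by linarith [Real.pi_div_two_pos] : -(Real.pi/2) < x) h2, hAt j]
  field_simp
end

section
/- Fix λ ∈ ℝ and A ∈ ℝ³, set x = λ·A₃, and assume sin(x/2) ≠ 0. Define Ã₁ = (sin x / x)·A₁ − (2·sin²(x/2)/x)·A₂, Ã₂ = (sin x / x)·A₂ + (2·sin²(x/2)/x)·A₁, and Ã₃ = A₃. Then A₁ = (x/2)·cot(x/2)·Ã₁ + (x/2)·Ã₂ and A₂ = (x/2)·cot(x/2)·Ã₂ − (x/2)·Ã₁; i.e., the λ-Minkowski Seiberg–Witten field redefinition Ã(A) is inverted by the stated formulas (note Ã₃ = A₃, so x = λ·Ã₃). -/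
/-!
With `y = x / 2`, the map `(a, b) ↦ (s a - t b, s b + t a)` for `s = sin x / x`, `t = 2 sin² y / x`
is multiplication by the complex number `s + t i = (sin y / y) e^{i y}`, whose inverse is
`y e^{-i y} / sin y = y cot y - y i`; the real and imaginary parts of `(y cot y - y i) (s + t i) = 1`
are all that the inversion needs.
-/

open Real

namespace Real

lemma ne_zero_of_sin_half_ne_zero {x : ℝ} (h : sin (x / 2) ≠ 0) : x ≠ 0 := by
  rintro rfl
  simp at h

lemma half_mul_cot_half_mul_sin_div_add (x : ℝ) (h : sin (x / 2) ≠ 0) :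
    x / 2 * (cos (x / 2) / sin (x / 2)) * (sin x / x) + x / 2 * (2 * sin (x / 2) ^ 2 / x) = 1 := by
  have hx := ne_zero_of_sin_half_ne_zero h
  rw [← sin_sq_add_cos_sq (x / 2), show x = 2 * (x / 2) by ring, sin_two_mul]
  field_simp
  ring

lemma half_mul_cot_half_mul_sin_sq_sub (x : ℝ) (h : sin (x / 2) ≠ 0) :
    x / 2 * (cos (x / 2) / sin (x / 2)) * (2 * sin (x / 2) ^ 2 / x) - x / 2 * (sin x / x) = 0 := by
  have hx := ne_zero_of_sin_half_ne_zero h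
  rw [show x = 2 * (x / 2) by ring, sin_two_mul]
  field_simp
  ring

end Real

theorem lambda_minkowski_SW_map_inverse_general (lam : ℝ) (A : Fin 3 → ℝ)
    (h : Real.sin (lam * A 2 / 2) ≠ 0)
    (At : Fin 3 → ℝ)
    (h1 : At 0 = (Real.sin (lam * A 2) / (lam * A 2)) * A 0
        - (2 * (Real.sin (lam * A 2 / 2)) ^ 2 / (lam * A 2)) * A 1)
    (h2 : At 1 = (Real.sin (lam * A 2) / (lam * A 2)) * A 1
        + (2 * (Real.sin (lam * A 2 / 2)) ^ 2 / (lam * A 2)) * A 0) :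
    A 0 = (lam * A 2 / 2) * (Real.cos (lam * A 2 / 2) / Real.sin (lam * A 2 / 2)) * At 0
        + (lam * A 2 / 2) * At 1 ∧
    A 1 = (lam * A 2 / 2) * (Real.cos (lam * A 2 / 2) / Real.sin (lam * A 2 / 2)) * At 1
        - (lam * A 2 / 2) * At 0 := by
  have hdiag := half_mul_cot_half_mul_sin_div_add (lam * A 2) h
  have hoff := half_mul_cot_half_mul_sin_sq_sub (lam * A 2) h
  rw [h1, h2]
  constructor
  · linear_combination (-A 0) * hdiag + A 1 * hoff
  · linear_combination (-A 1) * hdiag - A 0 * hoff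

/-- λ-Minkowski Seiberg–Witten map. With `x = λ A₃` and `sin(x/2) ≠ 0`,
setting `Ã₁ = (sin x / x) A₁ − (2 sin²(x/2)/x) A₂`, `Ã₂ = (sin x / x) A₂ + (2 sin²(x/2)/x) A₁`,
`Ã₃ = A₃`, one has `A₁ = (x/2)cot(x/2) Ã₁ + (x/2) Ã₂` and `A₂ = (x/2)cot(x/2) Ã₂ − (x/2) Ã₁`. -/
theorem lambda_minkowski_SW_map_inverse (lam : ℝ) (A : Fin 3 → ℝ)
    (h : Real.sin (lam * A 2 / 2) ≠ 0)
    (At : Fin 3 → ℝ)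
    (h1 : At 0 = (Real.sin (lam * A 2) / (lam * A 2)) * A 0
        - (2 * (Real.sin (lam * A 2 / 2)) ^ 2 / (lam * A 2)) * A 1)
    (h2 : At 1 = (Real.sin (lam * A 2) / (lam * A 2)) * A 1
        + (2 * (Real.sin (lam * A 2 / 2)) ^ 2 / (lam * A 2)) * A 0)
    (h3 : At 2 = A 2) :
    A 0 = (lam * A 2 / 2) * (Real.cos (lam * A 2 / 2) / Real.sin (lam * A 2 / 2)) * At 0
        + (lam * A 2 / 2) * At 1 ∧
    A 1 = (lam * A 2 / 2) * (Real.cos (lam * A 2 / 2) / Real.sin (lam * A 2 / 2)) * At 1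
        - (lam * A 2 / 2) * At 0 :=
  lambda_minkowski_SW_map_inverse_general lam A h At h1 h2
end
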